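/- arXiv:1612.03029 — 2 statements merged into one kernel-verified Lean document; each statement's English description precedes it below -/
import Mathlib

section
/- Let K ⊆ ℝ² be a nonempty compact convex set with 0 ∈ interior K. Then the image of F₀(K) \ {0} under the inversion i equals {w ∈ ℝ² : p₀(K, w) ≥ 1}; consequently the complement ℝ² \ i(F₀(K) \ {0}) equals {w ∈ ℝ² : p₀(K, w) < 1}, which is an open, bounded, convex set containing 0. -/
/-!
A point `y` lies on the closed disc with diameter `[0, s]` iff `‖y‖² ≤ ⟪s, y⟫` (Thales), and for
`y ≠ 0` dividing by `‖y‖²` turns this into `1 ≤ ⟪s, i(y)⟫`. So `i` maps `F₀(K) \ {0}` onto the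
union over `s ∈ K` of the half-planes `{w : 1 ≤ ⟪s, w⟫}`, which by compactness of `K` is
`{w : 1 ≤ p₀(K, w)}`. Its complement, the polar of `K`, is a strict sublevel set of the support
function, a continuous convex function; it is bounded because `K` contains a disc
`closedBall 0 ε`, which forces `p₀(K, w) ≥ ε ‖w‖`.
-/

open Metric Real Set MeasureTheory
open scoped RealInnerProductSpace

noncomputable section

/-- The Euclidean plane. -/
abbrev E2 := EuclideanSpace ℝ (Fin 2)

/-- The unit vector `u_θ = (cos θ, sin θ)`. -/
def uvec (θ : ℝ) : E2 := (WithLp.equiv 2 (Fin 2 → ℝ)).symm ![Real.cos θ, Real.sin θ]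

/-- The vector `v_θ = (−sin θ, cos θ)`. -/
def vvec (θ : ℝ) : E2 := (WithLp.equiv 2 (Fin 2 → ℝ)).symm ![-Real.sin θ, Real.cos θ]

/-- The Voronoi flower of `L` with respect to `x`: the union over `s ∈ L` of the closed
balls admitting the segment `[x, s]` as a diameter. -/
def vflower (x : E2) (L : Set E2) : Set E2 :=
  ⋃ s ∈ L, closedBall ((2:ℝ)⁻¹ • (x + s)) (‖s - x‖ / 2)

/-- The support function of `L` with respect to `x`: `p_x(L, w) = sup_{s ∈ L} ⟨s − x, w⟩`. -/
def suppf (x : E2) (L : Set E2) (w : E2) : ℝ :=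
  sSup ((fun s => ⟪s - x, w⟫) '' L)

open EuclideanGeometry

section InnerProductSpace

variable {F : Type*} [NormedAddCommGroup F] [InnerProductSpace ℝ F]

theorem mem_closedBall_midpoint_iff {x s y : F} :
    y ∈ closedBall ((2:ℝ)⁻¹ • (x + s)) (‖s - x‖ / 2) ↔ ‖y - x‖ ^ 2 ≤ ⟪s - x, y - x⟫ := by
  have hsub : y - (2:ℝ)⁻¹ • (x + s) = (y - x) - (2:ℝ)⁻¹ • (s - x) := by module
  rw [mem_closedBall, dist_eq_norm, ← pow_le_pow_iff_left₀ (norm_nonneg _) (by positivity)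
    two_ne_zero, hsub, norm_sub_sq_real, norm_smul, real_inner_smul_right, real_inner_comm,
    mul_pow, Real.norm_of_nonneg (by norm_num), div_pow]
  constructor <;> intro h <;> linarith

theorem inversion_zero_one_apply (y : F) : inversion (0 : F) 1 y = (‖y‖ ^ 2)⁻¹ • y := by
  simp [inversion]

theorem one_le_inner_inversion_iff {s y : F} (hy : y ≠ 0) :
    1 ≤ ⟪s, inversion 0 1 y⟫ ↔ ‖y‖ ^ 2 ≤ ⟪s, y⟫ := by
  rw [inversion_zero_one_apply, real_inner_smul_right, ← div_eq_inv_mul,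
    one_le_div (by positivity)]

end InnerProductSpace

theorem mem_vflower_iff {x y : E2} {K : Set E2} :
    y ∈ vflower x K ↔ ∃ s ∈ K, ‖y - x‖ ^ 2 ≤ ⟪s - x, y - x⟫ := by
  simp only [vflower, mem_iUnion, exists_prop, mem_closedBall_midpoint_iff]

section SupportFunction

variable {x : E2} {K : Set E2}

theorem continuous_suppf (hK : IsCompact K) : Continuous (suppf x K) :=
  hK.continuous_sSup (f := fun w s => ⟪s - x, w⟫) (by fun_prop)

theorem le_suppf (hK : IsCompact K) {s : E2} (hs : s ∈ K) (w : E2) :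
    ⟪s - x, w⟫ ≤ suppf x K w :=
  le_csSup (hK.bddAbove_image (by fun_prop)) (mem_image_of_mem _ hs)

theorem le_suppf_iff (hK : IsCompact K) (hne : K.Nonempty) {c : ℝ} {w : E2} :
    c ≤ suppf x K w ↔ ∃ s ∈ K, c ≤ ⟪s - x, w⟫ := by
  obtain ⟨s, hs, hmax⟩ := hK.exists_sSup_image_eq hne (f := fun s => ⟪s - x, w⟫) (by fun_prop)
  exact ⟨fun h => ⟨s, hs, hmax ▸ h⟩, fun ⟨t, ht, h⟩ => h.trans (le_suppf hK ht w)⟩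

theorem suppf_zero_right (hne : K.Nonempty) : suppf x K 0 = 0 := by
  simp [suppf, hne.image_const]

theorem convexOn_suppf (hK : IsCompact K) (hne : K.Nonempty) : ConvexOn ℝ univ (suppf x K) := by
  refine ⟨convex_univ, fun w₁ _ w₂ _ a b ha hb _ => ?_⟩
  refine csSup_le (hne.image _) (forall_mem_image.2 fun s hs => ?_)
  rw [inner_add_right, real_inner_smul_right, real_inner_smul_right, smul_eq_mul, smul_eq_mul]
  gcongr <;> exact le_suppf hK hs _

theorem mul_norm_le_suppf (hK : IsCompact K) {ε : ℝ} (hε : 0 ≤ ε) (hball : closedBall x ε ⊆ K)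
    (w : E2) : ε * ‖w‖ ≤ suppf x K w := by
  have hmem : x + (ε * ‖w‖⁻¹) • w ∈ K := by
    refine hball ?_
    rw [mem_closedBall, dist_eq_norm, add_sub_cancel_left, norm_smul, norm_mul, norm_inv,
      norm_norm, Real.norm_of_nonneg hε, mul_assoc]
    exact mul_le_of_le_one_right hε (inv_mul_le_one_of_le₀ le_rfl (norm_nonneg w))
  calc ε * ‖w‖ = ⟪(ε * ‖w‖⁻¹) • w, w⟫ := by
        rw [real_inner_smul_left, real_inner_self_eq_norm_sq, sq, mul_assoc, ← mul_assoc ‖w‖⁻¹,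
          inv_mul_mul_self]
    _ ≤ suppf x K w := by simpa using le_suppf (x := x) hK hmem w

theorem isBounded_setOf_suppf_lt (hK : IsCompact K) (hx : x ∈ interior K) (c : ℝ) :
    Bornology.IsBounded {w | suppf x K w < c} := by
  obtain ⟨ε, hε, hball⟩ := nhds_basis_closedBall.mem_iff.1 (mem_interior_iff_mem_nhds.1 hx)
  refine (isBounded_closedBall (x := 0) (r := c / ε)).subset fun w hw => ?_
  rw [mem_closedBall_zero_iff, le_div_iff₀ hε, mul_comm]
  exact (mul_norm_le_suppf hK hε.le hball w).trans hw.le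

end SupportFunction

theorem inversion_image_vflower_zero {K : Set E2} (hK : IsCompact K) (hne : K.Nonempty) :
    inversion (0 : E2) 1 '' (vflower 0 K \ {0}) = {w | 1 ≤ suppf 0 K w} := by
  rw [(inversion_involutive (0 : E2) one_ne_zero).image_eq_preimage_symm]
  ext w
  simp only [mem_preimage, mem_sdiff, mem_singleton_iff, inversion_eq_center one_ne_zero,
    mem_vflower_iff, mem_ofPred_eq, le_suppf_iff hK hne, sub_zero]
  rcases eq_or_ne w 0 with rfl | hw
  · simp
  · have hiw : inversion (0 : E2) 1 w ≠ 0 := by rwa [Ne, inversion_eq_center one_ne_zero]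
    simp only [hw, not_false_eq_true, and_true]
    refine exists_congr fun s => and_congr_right fun _ => ?_
    rw [← one_le_inner_inversion_iff hiw, inversion_inversion _ one_ne_zero]

theorem inversion_flower_general (K : Set E2) (hKc : IsCompact K)
    (h0 : (0:E2) ∈ interior K) :
    (EuclideanGeometry.inversion (0:E2) 1 '' (vflower 0 K \ {0})
        = {w : E2 | 1 ≤ suppf 0 K w}) ∧
    ((EuclideanGeometry.inversion (0:E2) 1 '' (vflower 0 K \ {0}))ᶜ
        = {w : E2 | suppf 0 K w < 1}) ∧
    IsOpen {w : E2 | suppf 0 K w < 1} ∧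
    Bornology.IsBounded {w : E2 | suppf 0 K w < 1} ∧
    Convex ℝ {w : E2 | suppf 0 K w < 1} ∧
    (0:E2) ∈ {w : E2 | suppf 0 K w < 1} := by
  have hne : K.Nonempty := ⟨0, interior_subset h0⟩
  have himage := inversion_image_vflower_zero hKc hne
  refine ⟨himage, ?_, isOpen_lt (continuous_suppf hKc) continuous_const,
    isBounded_setOf_suppf_lt hKc h0 1, ?_, ?_⟩
  · rw [himage]
    ext w
    simp
  · simpa using (convexOn_suppf hKc hne).convex_lt 1
  · simp [suppf_zero_right hne]

/-- the image of `F₀(K) \ {0}` under the inversion `i` of pole `0` with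
respect to the unit circle is `{w : p₀(K,w) ≥ 1}`; its complement is
`{w : p₀(K,w) < 1}`, which is open, bounded, convex and contains `0`. -/
theorem inversion_flower (K : Set E2) (hKne : K.Nonempty) (hKc : IsCompact K)
    (hKconv : Convex ℝ K) (h0 : (0:E2) ∈ interior K) :
    (EuclideanGeometry.inversion (0:E2) 1 '' (vflower 0 K \ {0})
        = {w : E2 | 1 ≤ suppf 0 K w}) ∧
    ((EuclideanGeometry.inversion (0:E2) 1 '' (vflower 0 K \ {0}))ᶜ
        = {w : E2 | suppf 0 K w < 1}) ∧
    IsOpen {w : E2 | suppf 0 K w < 1} ∧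
    Bornology.IsBounded {w : E2 | suppf 0 K w < 1} ∧
    Convex ℝ {w : E2 | suppf 0 K w < 1} ∧
    (0:E2) ∈ {w : E2 | suppf 0 K w < 1} :=
  inversion_flower_general K hKc h0
end
end

section
/- Let K ⊆ ℝ² be a nonempty compact convex set with 0 ∈ interior K, let D = ⋃_{x ∈ K} closedBall(x, ‖x‖) (the image of the Voronoi flower F₀(K) under the homothety y ↦ 2y), and let d(θ) = sup{t ≥ 0 : t·u_θ ∈ D} be the radial function of D. Assume θ ↦ d(θ) is differentiable on ℝ. Then d(θ) = 2·p₀(K, u_θ) for every θ, and the frontier of K (the antiorthotomic curve Γ_D of D with respect to the origin) admits the parametrization frontier K = { (1/2)·(d(θ)·u_θ + d'(θ)·v_θ) : θ ∈ ℝ }. -/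
open Metric Real Set MeasureTheory
open scoped RealInnerProductSpace

noncomputable section

/-!
Write `p(θ) = p₀(K, u_θ)`. Since `t • u ∈ closedBall s ‖s‖` iff `t² ≤ 2t⟪s, u⟫`, the radial
function of `D` is `2p`. If `x ∈ K` maximizes `⟪·, u_θ⟫`, then `φ ↦ p(φ) - ⟪x, u_φ⟫` is
nonnegative and vanishes at `θ`, so its derivative there vanishes: `⟪x, v_θ⟫ = p'(θ)`, which
pins down `x = p(θ) u_θ + p'(θ) v_θ`. By the supporting hyperplane theorem the frontier points
of `K` are exactly such maximizers.
-/

section InnerProductSpace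

variable {E : Type*} [NormedAddCommGroup E] [InnerProductSpace ℝ E]

lemma smul_mem_closedBall_norm_iff {u : E} (hu : ‖u‖ = 1) (t : ℝ) (s : E) :
    t • u ∈ closedBall s ‖s‖ ↔ t * t ≤ 2 * t * ⟪s, u⟫ := by
  rw [mem_closedBall, dist_eq_norm, ← sq_le_sq₀ (norm_nonneg _) (norm_nonneg _),
    norm_sub_sq_real, norm_smul, hu, real_inner_smul_left, real_inner_comm, Real.norm_eq_abs,
    mul_one, sq_abs]
  constructor <;> intro h <;> linarith

lemma setOf_smul_mem_iUnion_closedBall_norm {K : Set E} {u x : E} (hu : ‖u‖ = 1) (hx : x ∈ K)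
    (hmax : IsMaxOn (fun s => ⟪s, u⟫) K x) (hx0 : 0 ≤ ⟪x, u⟫) :
    {t : ℝ | 0 ≤ t ∧ t • u ∈ ⋃ s ∈ K, closedBall s ‖s‖} = Icc 0 (2 * ⟪x, u⟫) := by
  ext t
  simp only [mem_ofPred_eq, mem_iUnion, smul_mem_closedBall_norm_iff hu, exists_prop, mem_Icc]
  refine and_congr_right fun ht => ⟨?_, fun h => ⟨x, hx, by nlinarith⟩⟩
  rintro ⟨s, hs, hts⟩
  have hsx : ⟪s, u⟫ ≤ ⟪x, u⟫ := isMaxOn_iff.1 hmax s hs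
  rcases ht.eq_or_lt with rfl | ht
  · linarith
  · nlinarith

lemma notMem_interior_of_isMaxOn_inner {K : Set E} {w x : E} (hw : w ≠ 0)
    (hmax : IsMaxOn (fun s => ⟪s, w⟫) K x) : x ∉ interior K := by
  intro hx
  have hinner : (fun s => ⟪s, w⟫) = innerSL ℝ w := funext fun s => real_inner_comm w s
  have hzero := (hmax.isLocalMax (mem_interior_iff_mem_nhds.1 hx)).hasFDerivAt_eq_zero
    (hinner ▸ (innerSL ℝ w).hasFDerivAt)
  exact hw (by simpa using congr($hzero w))

lemma exists_isMaxOn_inner_of_notMem_interior [CompleteSpace E] {K : Set E} {x : E}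
    (hK : Convex ℝ K) (hKint : (interior K).Nonempty) (hx : x ∉ interior K) :
    ∃ w, ‖w‖ = 1 ∧ IsMaxOn (fun s => ⟪s, w⟫) K x := by
  obtain ⟨f, hf0, hf⟩ := geometric_hahn_banach_of_nonempty_interior_point hK hx hKint
  set v := (InnerProductSpace.toDual ℝ E).symm f
  have hv : v ≠ 0 := by simpa [v] using hf0
  refine ⟨‖v‖⁻¹ • v, by simp [norm_smul, hv], isMaxOn_iff.2 fun s hs => ?_⟩
  have hvf (y : E) : ⟪y, v⟫ = f y := by
    rw [real_inner_comm]
    exact InnerProductSpace.toDual_symm_apply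
  simp only [real_inner_smul_right, hvf]
  exact mul_le_mul_of_nonneg_left (hf s hs) (by positivity)

end InnerProductSpace

lemma inner_uvec (x : E2) (θ : ℝ) : ⟪x, uvec θ⟫ = x 0 * cos θ + x 1 * sin θ := by
  simp [uvec, PiLp.inner_apply, Fin.sum_univ_two]
  ring

lemma inner_vvec (x : E2) (θ : ℝ) : ⟪x, vvec θ⟫ = -(x 0 * sin θ) + x 1 * cos θ := by
  simp [vvec, PiLp.inner_apply, Fin.sum_univ_two]
  ring

lemma norm_uvec (θ : ℝ) : ‖uvec θ‖ = 1 := by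
  simp [EuclideanSpace.norm_eq, uvec, Fin.sum_univ_two]

lemma eq_inner_uvec_smul_add_inner_vvec_smul (x : E2) (θ : ℝ) :
    x = ⟪x, uvec θ⟫ • uvec θ + ⟪x, vvec θ⟫ • vvec θ := by
  rw [inner_uvec, inner_vvec]
  ext i
  fin_cases i <;> simp [uvec, vvec] <;> linear_combination (-(x _)) * sin_sq_add_cos_sq θ

lemma hasDerivAt_inner_uvec (x : E2) (θ : ℝ) :
    HasDerivAt (fun φ => ⟪x, uvec φ⟫) ⟪x, vvec θ⟫ θ := by
  simp only [inner_uvec, inner_vvec]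
  exact (((hasDerivAt_cos θ).const_mul (x 0)).add
    ((hasDerivAt_sin θ).const_mul (x 1))).congr_deriv (by ring)

lemma exists_uvec_eq {w : E2} (hw : ‖w‖ = 1) : ∃ θ, uvec θ = w := by
  set z : ℂ := ⟨w 0, w 1⟩
  have hz : ‖z‖ = 1 := by
    rw [← hw, Complex.norm_def, Complex.normSq_mk, EuclideanSpace.norm_eq, Fin.sum_univ_two]
    simp [pow_two]
  refine ⟨Complex.arg z, ?_⟩
  ext i
  fin_cases i
  · simpa [uvec, hz] using Complex.norm_mul_cos_arg z
  · simpa [uvec, hz] using Complex.norm_mul_sin_arg z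

lemma eq_smul_uvec_add_smul_vvec_of_hasDerivAt {x : E2} {g : ℝ → ℝ} {g' θ : ℝ}
    (hle : ∀ φ, ⟪x, uvec φ⟫ ≤ g φ) (heq : ⟪x, uvec θ⟫ = g θ) (hg : HasDerivAt g g' θ) :
    x = g θ • uvec θ + g' • vvec θ := by
  have hmin : IsLocalMin (fun φ => g φ - ⟪x, uvec φ⟫) θ :=
    Filter.Eventually.of_forall fun φ => by simp only [heq, sub_self]; linarith [hle φ]
  have hv : ⟪x, vvec θ⟫ = g' := by
    linarith [hmin.hasDerivAt_eq_zero (hg.sub (hasDerivAt_inner_uvec x θ))]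
  rw [← heq, ← hv]
  exact eq_inner_uvec_smul_add_inner_vvec_smul x θ

lemma inner_le_suppf {K : Set E2} (hK : IsCompact K) {x : E2} (hx : x ∈ K) (w : E2) :
    ⟪x, w⟫ ≤ suppf 0 K w := by
  have hcont : Continuous fun s : E2 => ⟪s - 0, w⟫ := by fun_prop
  simpa [suppf] using le_csSup (hK.bddAbove_image hcont.continuousOn) (mem_image_of_mem _ hx)

lemma suppf_eq_inner_of_isMaxOn {K : Set E2} {x w : E2} (hx : x ∈ K)
    (hmax : IsMaxOn (fun s => ⟪s, w⟫) K x) : suppf 0 K w = ⟪x, w⟫ := by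
  refine IsGreatest.csSup_eq ⟨⟨x, hx, by simp⟩, ?_⟩
  rintro _ ⟨s, hs, rfl⟩
  simpa using isMaxOn_iff.1 hmax s hs

lemma sSup_setOf_smul_uvec_mem_iUnion_closedBall_norm {K : Set E2} (hK : IsCompact K)
    (hK0 : 0 ∈ K) (θ : ℝ) :
    sSup {t : ℝ | 0 ≤ t ∧ t • uvec θ ∈ ⋃ x ∈ K, closedBall x ‖x‖} = 2 * suppf 0 K (uvec θ) := by
  obtain ⟨x, hx, hmax⟩ := hK.exists_isMaxOn ⟨0, hK0⟩
    (by fun_prop : Continuous fun s : E2 => ⟪s, uvec θ⟫).continuousOn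
  have hx0 : 0 ≤ ⟪x, uvec θ⟫ := by simpa using isMaxOn_iff.1 hmax 0 hK0
  rw [setOf_smul_mem_iUnion_closedBall_norm (norm_uvec θ) hx hmax hx0, csSup_Icc (by linarith),
    suppf_eq_inner_of_isMaxOn hx hmax]

theorem antiorthotomic_parametrization_general (K : Set E2)
    (hKc : IsCompact K) (hKconv : Convex ℝ K) (h0 : (0:E2) ∈ interior K)
    (D : Set E2) (hD : D = ⋃ x ∈ K, closedBall x ‖x‖)
    (d : ℝ → ℝ) (hd : ∀ θ, d θ = sSup {t : ℝ | 0 ≤ t ∧ t • uvec θ ∈ D})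
    (hdiff : Differentiable ℝ d) :
    (∀ θ : ℝ, d θ = 2 * suppf 0 K (uvec θ)) ∧
    frontier K
      = {y : E2 | ∃ θ : ℝ, y = (2:ℝ)⁻¹ • (d θ • uvec θ + deriv d θ • vvec θ)} := by
  have hd_eq θ : d θ = 2 * suppf 0 K (uvec θ) := by
    rw [hd, hD, sSup_setOf_smul_uvec_mem_iUnion_closedBall_norm hKc (interior_subset h0)]
  have hmax_eq {θ x} (hx : x ∈ K) (hmax : IsMaxOn (fun s => ⟪s, uvec θ⟫) K x) :
      x = (2:ℝ)⁻¹ • (d θ • uvec θ + deriv d θ • vvec θ) := by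
    have := eq_smul_uvec_add_smul_vvec_of_hasDerivAt (g := fun φ => 2⁻¹ * d φ)
      (fun φ => by simpa [hd_eq] using inner_le_suppf hKc hx (uvec φ))
      (by simp [hd_eq, suppf_eq_inner_of_isMaxOn hx hmax]) ((hdiff θ).hasDerivAt.const_mul 2⁻¹)
    rwa [smul_add, smul_smul, smul_smul]
  refine ⟨hd_eq, Set.ext fun x => ⟨fun hx => ?_, ?_⟩⟩
  · obtain ⟨w, hw, hmax⟩ := exists_isMaxOn_inner_of_notMem_interior hKconv ⟨0, h0⟩ hx.2
    obtain ⟨θ, rfl⟩ := exists_uvec_eq hw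
    exact ⟨θ, hmax_eq (hKc.isClosed.frontier_subset hx) hmax⟩
  · rintro ⟨θ, rfl⟩
    obtain ⟨x, hx, hmax⟩ := hKc.exists_isMaxOn ⟨0, interior_subset h0⟩
      (by fun_prop : Continuous fun s : E2 => ⟪s, uvec θ⟫).continuousOn
    rw [← hmax_eq hx hmax]
    have huvec : uvec θ ≠ 0 := norm_ne_zero_iff.1 (by simp [norm_uvec])
    exact ⟨subset_closure hx, notMem_interior_of_isMaxOn_inner huvec hmax⟩

/-- with `D = ⋃_{x ∈ K} closedBall x ‖x‖` (the image of `F₀(K)` under the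
homothety `y ↦ 2y`) and `d` the radial function of `D`, assumed differentiable, one has
`d(θ) = 2 p₀(K, u_θ)` and the antiorthotomic curve (the frontier of `K`) is
parametrized by `θ ↦ (1/2)(d(θ)·u_θ + d'(θ)·v_θ)`. -/
theorem antiorthotomic_parametrization (K : Set E2) (hKne : K.Nonempty)
    (hKc : IsCompact K) (hKconv : Convex ℝ K) (h0 : (0:E2) ∈ interior K)
    (D : Set E2) (hD : D = ⋃ x ∈ K, closedBall x ‖x‖)
    (d : ℝ → ℝ) (hd : ∀ θ, d θ = sSup {t : ℝ | 0 ≤ t ∧ t • uvec θ ∈ D})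
    (hdiff : Differentiable ℝ d) :
    (∀ θ : ℝ, d θ = 2 * suppf 0 K (uvec θ)) ∧
    frontier K
      = {y : E2 | ∃ θ : ℝ, y = (2:ℝ)⁻¹ • (d θ • uvec θ + deriv d θ • vvec θ)} :=
  antiorthotomic_parametrization_general K hKc hKconv h0 D hD d hd hdiff
end
end
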